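/- arXiv:1509.00675 — 2 statements merged into one kernel-verified Lean document; each statement's English description precedes it below -/
import Mathlib

section
/- Define r = inf{s ≥ 0 : μ([s, s+ε)) > 0 for all ε > 0} and l = sup{s < 0 : μ((s-ε, s]) > 0 for all ε > 0}, and m = (l+r)/2, assuming 0 < μ([0,∞)) < 1 and Gaussian moments. If α > m then π(t, αt) → 1 as t → ∞, and if α < m then π(t, αt) → 0 as t → ∞, where π(t,x) = ∫_{[0,∞)} e^{bx-b²t/2} μ(db)/∫_ℝ e^{bx-b²t/2} μ(db). -/
open MeasureTheory Set Filter

/-- The posterior probability that the drift lies in `S` under the tilted measure `μ_{t,x}`. -/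
noncomputable def tiltProb (μ : Measure ℝ) (t x : ℝ) (S : Set ℝ) : ℝ :=
  (∫ b in S, Real.exp (b * x - b ^ 2 * t / 2) ∂μ) /
  (∫ b, Real.exp (b * x - b ^ 2 * t / 2) ∂μ)

/-- The left endpoint `r` of the support of `μ` restricted to `[0,∞)`. -/
noncomputable def rEnd (μ : Measure ℝ) : ℝ :=
  sInf {s : ℝ | 0 ≤ s ∧ ∀ ε > (0:ℝ), 0 < μ (Set.Ico s (s + ε))}

/-- The right endpoint `l` of the support of `μ` restricted to `(-∞,0)`. -/
noncomputable def lEnd (μ : Measure ℝ) : ℝ :=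
  sSup {s : ℝ | s < 0 ∧ ∀ ε > (0:ℝ), 0 < μ (Set.Ioc (s - ε) s)}

/-! Completing the square, `π(t, αt) = N / (N + M)` where `N` and `M` integrate
`exp (-(b - α)² t / 2)` over `b ≥ 0` and over `b < 0`. If `μ` charges a set of `b` on one side
within distance `ρ` of `α` while a.e. `b` on the other side is at distance `> ρ`, then after
multiplying by `exp (ρ² t / 2)` the near side stays bounded below and the far side tends to `0` by
dominated convergence. For `α > m` the near side is `b ≥ 0`, since `μ` charges every `[r, r + ε)`
while a.e. negative `b` is `≤ l`; for `α < m` the roles are exchanged. -/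

section Endpoints

variable {μ : Measure ℝ}

/- The supremum of the points `x` with `μ [a, x) = 0` is charged by `μ` on every interval to its
right. -/
theorem exists_mem_Ico_forall_measure_Ico_pos {a b : ℝ} (h : 0 < μ (Ico a b)) :
    ∃ s ∈ Ico a b, ∀ ε > 0, 0 < μ (Ico s (s + ε)) := by
  set Z := {x | μ (Ico a x) = 0}
  have haZ : a ∈ Z := by simp [Z]
  have hZb : ∀ x ∈ Z, x < b := fun x hx =>
    lt_of_not_ge fun hbx => h.ne' (measure_mono_null (Ico_subset_Ico_right hbx) hx)
  have hZ : BddAbove Z := ⟨b, fun x hx => (hZb x hx).le⟩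
  obtain ⟨u, -, hu, huZ⟩ := exists_seq_tendsto_sSup ⟨a, haZ⟩ hZ
  have hcZ : sSup Z ∈ Z := by
    refine measure_mono_null (fun y hy => ?_) (measure_iUnion_null huZ)
    obtain ⟨n, hn⟩ := (hu.eventually (lt_mem_nhds hy.2)).exists
    exact mem_iUnion.2 ⟨n, hy.1, hn⟩
  refine ⟨sSup Z, ⟨le_csSup hZ haZ, hZb _ hcZ⟩, fun ε hε => pos_iff_ne_zero.2 fun h0 => ?_⟩
  have hnull : sSup Z + ε ∈ Z := by
    show μ (Ico a (sSup Z + ε)) = 0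
    rw [← Ico_union_Ico_eq_Ico (le_csSup hZ haZ) (by linarith)]
    exact measure_union_null hcZ h0
  exact (le_csSup hZ hnull).not_gt (by linarith)

theorem exists_mem_Ioc_forall_measure_Ioc_pos {a b : ℝ} (h : 0 < μ (Ioc a b)) :
    ∃ s ∈ Ioc a b, ∀ ε > 0, 0 < μ (Ioc (s - ε) s) := by
  have hmap : ∀ x y, μ.map Neg.neg (Ico x y) = μ (Ioc (-y) (-x)) := fun x y => by
    rw [Measure.map_apply measurable_neg measurableSet_Ico, ← neg_Ico]; rfl
  obtain ⟨s, hs, hpos⟩ := exists_mem_Ico_forall_measure_Ico_pos (μ := μ.map Neg.neg)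
    (a := -b) (b := -a) (by rwa [hmap, neg_neg, neg_neg])
  refine ⟨-s, ⟨by linarith [hs.2], by linarith [hs.1]⟩, fun ε hε => ?_⟩
  simpa [hmap, sub_eq_neg_add, add_comm] using hpos ε hε

theorem exists_mem_Ioo_forall_measure_Ioc_pos {a b : ℝ} (h : 0 < μ (Ioo a b)) :
    ∃ s ∈ Ioo a b, ∀ ε > 0, 0 < μ (Ioc (s - ε) s) := by
  obtain ⟨n, hn⟩ : ∃ n : ℕ, 0 < μ (Ioc a (b - 1 / (n + 1))) := by
    by_contra! hzero
    refine h.ne' (measure_mono_null (fun y hy => ?_)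
      (measure_iUnion_null fun n => nonpos_iff_eq_zero.1 (hzero n)))
    obtain ⟨n, hn⟩ := exists_nat_one_div_lt (sub_pos.2 hy.2)
    exact mem_iUnion.2 ⟨n, hy.1, by linarith⟩
  obtain ⟨s, hs, hpos⟩ := exists_mem_Ioc_forall_measure_Ioc_pos hn
  exact ⟨s, ⟨hs.1, hs.2.trans_lt (sub_lt_self _ Nat.one_div_pos_of_nat)⟩, hpos⟩

theorem rEnd_nonneg (μ : Measure ℝ) : 0 ≤ rEnd μ :=
  Real.sInf_nonneg fun _ hs => hs.1

theorem measure_Ico_rEnd_pos (hμ : 0 < μ (Ici 0)) {ε : ℝ} (hε : 0 < ε) :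
    0 < μ (Ico (rEnd μ) (rEnd μ + ε)) := by
  obtain ⟨b, hb⟩ := ((tendsto_measure_Ico_atTop μ 0).eventually (lt_mem_nhds hμ)).exists
  obtain ⟨s₀, hs₀, hpos₀⟩ := exists_mem_Ico_forall_measure_Ico_pos hb
  obtain ⟨s, hs, hsr⟩ := exists_lt_of_csInf_lt (s := {s | 0 ≤ s ∧ ∀ ε > 0, 0 < μ (Ico s (s + ε))})
    ⟨s₀, hs₀.1, hpos₀⟩ (lt_add_of_pos_right (rEnd μ) hε)
  have hrs : rEnd μ ≤ s := csInf_le ⟨0, fun _ h => h.1⟩ hs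
  exact (hs.2 _ (sub_pos.2 hsr)).trans_le (measure_mono (Ico_subset_Ico hrs (by linarith)))

theorem measure_Ico_rEnd (μ : Measure ℝ) : μ (Ico 0 (rEnd μ)) = 0 := by
  by_contra h
  obtain ⟨s, hs, hpos⟩ := exists_mem_Ico_forall_measure_Ico_pos (pos_iff_ne_zero.2 h)
  exact hs.2.not_ge (csInf_le ⟨0, fun _ h => h.1⟩ ⟨hs.1, hpos⟩)

theorem measure_Ioo_lEnd (μ : Measure ℝ) : μ (Ioo (lEnd μ) 0) = 0 := by
  by_contra h
  obtain ⟨s, hs, hpos⟩ := exists_mem_Ioo_forall_measure_Ioc_pos (pos_iff_ne_zero.2 h)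
  exact hs.1.not_ge (le_csSup ⟨0, fun _ h => h.1.le⟩ ⟨hs.2, hpos⟩)

theorem exists_lEnd_sub_lt (hμ : 0 < μ (Iio 0)) {δ : ℝ} (hδ : 0 < δ) :
    ∃ s, (s < 0 ∧ ∀ ε > 0, 0 < μ (Ioc (s - ε) s)) ∧ lEnd μ - δ < s := by
  have hlim := tendsto_measure_iUnion_atBot (μ := μ) (s := fun a : ℝ => Ioo a 0)
    fun _ _ hxy => Ioo_subset_Ioo_left hxy
  rw [iUnion_Ioo_left] at hlim
  obtain ⟨a, ha⟩ := (hlim.eventually (lt_mem_nhds hμ)).exists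
  obtain ⟨s, hs, hpos⟩ := exists_mem_Ioo_forall_measure_Ioc_pos ha
  exact exists_lt_of_lt_csSup ⟨s, hs.2, hpos⟩ (sub_lt_self _ hδ)

end Endpoints

section Tilt

open Real

variable {μ : Measure ℝ}

theorem tendsto_integral_exp_mul_atTop {Ω : Type*} [MeasurableSpace Ω] {ν : Measure Ω}
    [IsFiniteMeasure ν] {f : Ω → ℝ} (hf : Measurable f) (hneg : ∀ᵐ ω ∂ν, f ω < 0) :
    Tendsto (fun t => ∫ ω, exp (f ω * t) ∂ν) atTop (nhds 0) := by
  have hlim := tendsto_integral_filter_of_dominated_convergence (fun _ => 1)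
    (Eventually.of_forall fun t => (hf.mul_const t).exp.aestronglyMeasurable)
    (?_ : ∀ᶠ t in atTop, ∀ᵐ ω ∂ν, ‖exp (f ω * t)‖ ≤ 1) (integrable_const 1)
    (hneg.mono fun ω hω => tendsto_exp_atBot.comp (tendsto_id.const_mul_atTop_of_neg hω))
  · simpa using hlim
  filter_upwards [eventually_ge_atTop 0] with t ht
  filter_upwards [hneg] with ω hω
  rw [norm_of_nonneg (exp_pos _).le, exp_le_one_iff]
  exact mul_nonpos_of_nonpos_of_nonneg hω.le ht

theorem exp_tilt_eq (α ρ t b : ℝ) :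
    exp (b * (α * t) - b ^ 2 * t / 2) =
      exp ((α ^ 2 - ρ ^ 2) / 2 * t) * exp ((ρ ^ 2 - (b - α) ^ 2) / 2 * t) := by
  rw [← exp_add]; ring_nf

theorem integrable_exp_sq_sub_mul [IsFiniteMeasure μ] (α ρ : ℝ) {t : ℝ} (ht : 0 ≤ t) :
    Integrable (fun b => exp ((ρ ^ 2 - (b - α) ^ 2) / 2 * t)) μ := by
  refine (integrable_const (exp (ρ ^ 2 / 2 * t))).mono' (by fun_prop) (ae_of_all _ fun b => ?_)
  rw [norm_of_nonneg (exp_pos _).le, exp_le_exp]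
  nlinarith [mul_nonneg (sq_nonneg (b - α)) ht]

theorem integrable_exp_tilt [IsFiniteMeasure μ] (α : ℝ) {t : ℝ} (ht : 0 ≤ t) :
    Integrable (fun b => exp (b * (α * t) - b ^ 2 * t / 2)) μ := by
  simpa only [exp_tilt_eq α 0] using (integrable_exp_sq_sub_mul α 0 ht).const_mul _

/- After factoring out `exp ((α² - ρ²) t / 2)` the integrand is `≥ 1` on the ball and tends to
`0` a.e. on `Q`. -/
theorem tendsto_setIntegral_exp_tilt_div [IsFiniteMeasure μ] {P Q : Set ℝ} {α ρ : ℝ}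
    (hP : MeasurableSet P) (hPρ : 0 < μ (P ∩ Metric.closedBall α ρ))
    (hQ : ∀ᵐ b ∂μ.restrict Q, ρ < |b - α|) :
    Tendsto (fun t => (∫ b in Q, exp (b * (α * t) - b ^ 2 * t / 2) ∂μ) /
      ∫ b in P, exp (b * (α * t) - b ^ 2 * t / 2) ∂μ) atTop (nhds 0) := by
  set B := P ∩ Metric.closedBall α ρ
  set h : ℝ → ℝ → ℝ := fun t b => exp ((ρ ^ 2 - (b - α) ^ 2) / 2 * t)
  have hρ : 0 ≤ ρ := Metric.nonempty_closedBall.1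
    ((nonempty_of_measure_ne_zero hPρ.ne').mono inter_subset_right)
  have hB : 0 < μ.real B := ENNReal.toReal_pos hPρ.ne' (measure_ne_top μ B)
  have hQlim : Tendsto (fun t => ∫ b in Q, h t b ∂μ) atTop (nhds 0) := by
    refine tendsto_integral_exp_mul_atTop (by fun_prop) (hQ.mono fun b hb => ?_)
    nlinarith [sq_abs (b - α)]
  have hPlow : ∀ t ≥ 0, μ.real B ≤ ∫ b in P, h t b ∂μ := fun t ht => by
    have hint := integrable_exp_sq_sub_mul (μ := μ) α ρ ht
    calc μ.real B = 1 * μ.real B := (one_mul _).symm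
      _ ≤ ∫ b in B, h t b ∂μ := by
          refine setIntegral_ge_of_const_le_real (hP.inter Metric.isClosed_closedBall.measurableSet)
            (measure_ne_top μ B) (fun b hb => one_le_exp (mul_nonneg ?_ ht)) hint.integrableOn
          have hb := Metric.mem_closedBall.1 hb.2
          rw [Real.dist_eq] at hb
          nlinarith [sq_abs (b - α), abs_nonneg (b - α)]
      _ ≤ ∫ b in P, h t b ∂μ := setIntegral_mono_set hint.integrableOn
          (ae_of_all _ fun b => (exp_pos _).le) inter_subset_left.eventuallyLE
  refine squeeze_zero' ?_ ?_ (by simpa using hQlim.div_const (μ.real B))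
  · filter_upwards with t
    exact div_nonneg (integral_nonneg fun b => (exp_pos _).le)
      (integral_nonneg fun b => (exp_pos _).le)
  filter_upwards [eventually_ge_atTop 0] with t ht
  simp_rw [exp_tilt_eq α ρ t]
  rw [integral_const_mul, integral_const_mul, mul_div_mul_left _ _ (exp_pos _).ne']
  exact div_le_div_of_nonneg_left (integral_nonneg fun b => (exp_pos _).le) hB (hPlow t ht)

theorem tendsto_div_add_of_tendsto_div {ι : Type*} {l : Filter ι} {f g : ι → ℝ}
    (hg : Tendsto (fun x => g x / f x) l (nhds 0)) (hf : ∀ᶠ x in l, f x ≠ 0) :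
    Tendsto (fun x => f x / (f x + g x)) l (nhds 1) := by
  have hlim : Tendsto (fun x => (1 + g x / f x)⁻¹) l (nhds 1) := by
    simpa using (tendsto_const_nhds.add hg).inv₀ (by norm_num : (1 : ℝ) + 0 ≠ 0)
  exact hlim.congr' (hf.mono fun x hx => by rw [one_add_div hx, inv_div])

theorem tiltProb_eq_div_add [IsFiniteMeasure μ] {P : Set ℝ} (hP : MeasurableSet P) (α : ℝ)
    {t : ℝ} (ht : 0 ≤ t) :
    tiltProb μ t (α * t) P = (∫ b in P, exp (b * (α * t) - b ^ 2 * t / 2) ∂μ) /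
      ((∫ b in P, exp (b * (α * t) - b ^ 2 * t / 2) ∂μ) +
        ∫ b in Pᶜ, exp (b * (α * t) - b ^ 2 * t / 2) ∂μ) := by
  rw [integral_add_compl hP (integrable_exp_tilt α ht)]; rfl

theorem tiltProb_compl [IsFiniteMeasure μ] [NeZero μ] {P : Set ℝ} (hP : MeasurableSet P)
    (α : ℝ) {t : ℝ} (ht : 0 ≤ t) :
    tiltProb μ t (α * t) Pᶜ = 1 - tiltProb μ t (α * t) P := by
  have hpos := integral_exp_pos (μ := μ) (integrable_exp_tilt α ht)
  rw [eq_sub_iff_add_eq, tiltProb, tiltProb, ← add_div, add_comm,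
    integral_add_compl hP (integrable_exp_tilt α ht), div_self hpos.ne']

theorem tendsto_tiltProb_one [IsFiniteMeasure μ] {P : Set ℝ} {α ρ : ℝ} (hP : MeasurableSet P)
    (hPρ : 0 < μ (P ∩ Metric.closedBall α ρ)) (hQ : ∀ᵐ b ∂μ.restrict Pᶜ, ρ < |b - α|) :
    Tendsto (fun t => tiltProb μ t (α * t) P) atTop (nhds 1) := by
  have : NeZero (μ.restrict P) := ⟨by
    rw [Ne, Measure.restrict_eq_zero]
    exact (hPρ.trans_le (measure_mono inter_subset_left)).ne'⟩
  have hN : ∀ᶠ t in atTop, ∫ b in P, exp (b * (α * t) - b ^ 2 * t / 2) ∂μ ≠ 0 := by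
    filter_upwards [eventually_ge_atTop 0] with t ht
    exact (integral_exp_pos (integrable_exp_tilt α ht)).ne'
  refine (tendsto_div_add_of_tendsto_div (tendsto_setIntegral_exp_tilt_div hP hPρ hQ) hN).congr' ?_
  filter_upwards [eventually_ge_atTop 0] with t ht
  exact (tiltProb_eq_div_add hP α ht).symm

end Tilt

section Threshold

variable {μ : Measure ℝ} [IsFiniteMeasure μ]

/- With `θ = α - m`, the ball around `α` reaching down to `c = min 0 (l + θ)` contains
`[r, r + θ)`, while a.e. negative `b` lies in `(-∞, l]` and hence strictly below `c`. -/
theorem tendsto_tiltProb_Ici_one (hμ : 0 < μ (Ici 0)) {α : ℝ}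
    (hα : (lEnd μ + rEnd μ) / 2 < α) :
    Tendsto (fun t => tiltProb μ t (α * t) (Ici 0)) atTop (nhds 1) := by
  set m := (lEnd μ + rEnd μ) / 2 with hm
  set c := min 0 (lEnd μ + (α - m))
  have hc0 : c ≤ 0 := min_le_left _ _
  have hcl : c ≤ lEnd μ + (α - m) := min_le_right _ _
  have hr := rEnd_nonneg μ
  refine tendsto_tiltProb_one (ρ := α - c) measurableSet_Ici ?_ ?_
  · refine (measure_Ico_rEnd_pos hμ (ε := 2 * α - c - rEnd μ) (by linarith)).trans_le
      (measure_mono fun b hb => ⟨hr.trans hb.1, ?_⟩)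
    rw [Metric.mem_closedBall, Real.dist_eq, abs_le]
    constructor <;> linarith [hb.1, hb.2]
  · rw [compl_Ici]
    filter_upwards [ae_restrict_mem measurableSet_Iio,
      ae_restrict_of_ae (measure_eq_zero_iff_ae_notMem.1 (measure_Ioo_lEnd μ))] with b hb hbl
    have hbc : b < c := lt_min hb (by linarith [not_lt.1 fun h => hbl ⟨h, hb⟩])
    calc α - c < α - b := by linarith
      _ ≤ |b - α| := by rw [abs_sub_comm]; exact le_abs_self _

/- Symmetrically, with `θ = m - α` and the ball reaching up to `c = max (r - θ) s` for a point
`s < 0` near `l` charged on its left. The ball must end strictly below `r`, which may equal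
`l = 0`, so `l` itself cannot take the place of `s`. -/
theorem tendsto_tiltProb_Ici_zero (hμ : 0 < μ (Iio 0)) {α : ℝ}
    (hα : α < (lEnd μ + rEnd μ) / 2) :
    Tendsto (fun t => tiltProb μ t (α * t) (Ici 0)) atTop (nhds 0) := by
  have : NeZero μ := ⟨fun h => by simp [h] at hμ⟩
  set m := (lEnd μ + rEnd μ) / 2 with hm
  obtain ⟨s, ⟨hs0, hs⟩, hls⟩ := exists_lEnd_sub_lt hμ (sub_pos.2 hα)
  set c := max (rEnd μ - (m - α)) s
  have hcr : rEnd μ - (m - α) ≤ c := le_max_left _ _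
  have hcs : s ≤ c := le_max_right _ _
  have hr := rEnd_nonneg μ
  have hIio : Tendsto (fun t => tiltProb μ t (α * t) (Iio 0)) atTop (nhds 1) := by
    refine tendsto_tiltProb_one (ρ := c - α) measurableSet_Iio ?_ ?_
    · refine (hs (s - (2 * α - c)) (by linarith)).trans_le
        (measure_mono fun b hb => ⟨hb.2.trans_lt hs0, ?_⟩)
      rw [Metric.mem_closedBall, Real.dist_eq, abs_le]
      constructor <;> linarith [hb.1, hb.2]
    · rw [compl_Iio]
      filter_upwards [ae_restrict_mem measurableSet_Ici,
        ae_restrict_of_ae (measure_eq_zero_iff_ae_notMem.1 (measure_Ico_rEnd μ))] with b hb hbr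
      have hrb : rEnd μ ≤ b := not_lt.1 fun h => hbr ⟨hb, h⟩
      have hcr' : c < rEnd μ := max_lt (by linarith) (by linarith)
      calc c - α < b - α := by linarith
        _ ≤ |b - α| := le_abs_self _
  have hlim := (tendsto_const_nhds (x := (1 : ℝ))).sub hIio
  rw [sub_self] at hlim
  refine hlim.congr' ?_
  filter_upwards [eventually_ge_atTop 0] with t ht
  rw [← compl_Ici, tiltProb_compl measurableSet_Ici α ht, sub_sub_cancel]

end Threshold

theorem stmt_10_general (μ : Measure ℝ) [IsProbabilityMeasure μ]
    (hμ0 : 0 < μ (Set.Ici (0:ℝ))) (hμ1 : μ (Set.Ici (0:ℝ)) < 1) :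
    (∀ α : ℝ, (lEnd μ + rEnd μ) / 2 < α →
      Tendsto (fun t => tiltProb μ t (α * t) (Set.Ici 0)) atTop (nhds 1)) ∧
    (∀ α : ℝ, α < (lEnd μ + rEnd μ) / 2 →
      Tendsto (fun t => tiltProb μ t (α * t) (Set.Ici 0)) atTop (nhds 0)) := by
  have hμneg : 0 < μ (Iio 0) := by
    rw [← compl_Ici, prob_compl_eq_one_sub measurableSet_Ici]
    exact tsub_pos_of_lt hμ1
  exact ⟨fun α hα => tendsto_tiltProb_Ici_one hμ0 hα,
    fun α hα => tendsto_tiltProb_Ici_zero hμneg hα⟩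

theorem stmt_10 (μ : Measure ℝ) [IsProbabilityMeasure μ]
    (hμ0 : 0 < μ (Set.Ici (0:ℝ))) (hμ1 : μ (Set.Ici (0:ℝ)) < 1)
    (ε : ℝ) (hε : 0 < ε)
    (hexp : Integrable (fun b => Real.exp (ε * b ^ 2)) μ) :
    (∀ α : ℝ, (lEnd μ + rEnd μ) / 2 < α →
      Tendsto (fun t => tiltProb μ t (α * t) (Set.Ici 0)) atTop (nhds 1)) ∧
    (∀ α : ℝ, α < (lEnd μ + rEnd μ) / 2 →
      Tendsto (fun t => tiltProb μ t (α * t) (Set.Ici 0)) atTop (nhds 0)) :=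
  stmt_10_general μ hμ0 hμ1
end

section
/- Let μ be a probability measure with support contained in ℝ and let r, l be as defined (l ≤ 0 ≤ r possibly l = r = 0). Along any level curve x(t,π) with μ_{t,x(t,π)}([0,∞)) = π fixed, the truncated posterior means converge: E_{t,x(t,π)}[B 1_{B≥0}] → π·r and E_{t,x(t,π)}[B 1_{B<0}] → (1-π)·l as t → ∞. Consequently σ(t,π) = (1-π) E[B1_{B≥0}] - π E[B1_{B<0}] converges to (r - l) π (1 - π). -/
open MeasureTheory Set Filter

/-- The truncated posterior mean `E_{t,x}[B 1_S(B)]` under the tilted measure `μ_{t,x}`. -/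
noncomputable def tiltMean (μ : Measure ℝ) (t x : ℝ) (S : Set ℝ) : ℝ :=
  (∫ b in S, b * Real.exp (b * x - b ^ 2 * t / 2) ∂μ) /
  (∫ b, Real.exp (b * x - b ^ 2 * t / 2) ∂μ)

open Topology

/-!
Relative to `a`, the posterior weight of `b` is `exp ((b - a) (x - (a + b) t / 2))`. Keeping the
posterior odds of `[0, ∞)` against `(-∞, 0)` fixed forces `l - η ≤ x(t) / t ≤ r + η` for large
`t`: a larger drift would make the negative half exponentially negligible against the mass of `μ`
near `r` (which keeps weight `≥ 1`), a smaller one would make the positive half (weight `≤ 1`)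
negligible against the mass near `l`. Once `x ≤ (r + η) t`, `(b - r)` times the weight of any
`b ≥ r + 4η` is at most `2 / (t η)` times the weight of any `a ∈ [r, r + η)`, so the posterior of
`μ` on `[0, ∞)`, which lives on `[r, ∞)`, has mean within `4η + O(1/t)` of `r`. The negative half is
the mirror image under `b ↦ -b`. The points `r` and `l` are the extreme points of the supports of
`μ` restricted to `[0, ∞)` and to `(-∞, 0)`.
-/

noncomputable def tiltWeight (t x b : ℝ) : ℝ := Real.exp (b * x - b ^ 2 * t / 2)

section TiltWeight

variable {t x : ℝ}

lemma tiltProb_eq (μ : Measure ℝ) (t x : ℝ) (S : Set ℝ) :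
    tiltProb μ t x S = (∫ b in S, tiltWeight t x b ∂μ) / ∫ b, tiltWeight t x b ∂μ := rfl

lemma tiltMean_univ (ν : Measure ℝ) (t x : ℝ) :
    tiltMean ν t x univ = (∫ b, b * tiltWeight t x b ∂ν) / ∫ b, tiltWeight t x b ∂ν := by
  rw [tiltMean, Measure.restrict_univ]; rfl

lemma tiltMean_eq (μ : Measure ℝ) (t x : ℝ) (S : Set ℝ) :
    tiltMean μ t x S = (∫ b in S, b * tiltWeight t x b ∂μ) / ∫ b, tiltWeight t x b ∂μ := rfl

lemma continuous_tiltWeight (t x : ℝ) : Continuous (tiltWeight t x) := by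
  unfold tiltWeight; fun_prop

lemma tiltWeight_pos (t x b : ℝ) : 0 < tiltWeight t x b := Real.exp_pos _

lemma tiltWeight_le (ht : 0 < t) (b : ℝ) : tiltWeight t x b ≤ Real.exp (x ^ 2 / (2 * t)) := by
  refine Real.exp_le_exp.2 ?_
  rw [le_div_iff₀ (by positivity)]
  nlinarith [sq_nonneg (b * t - x)]

lemma abs_mul_tiltWeight_le (ht : 0 < t) (b : ℝ) :
    |b| * tiltWeight t x b ≤ Real.exp ((|x| + 1) ^ 2 / (2 * t)) := by
  have hb : |b| ≤ Real.exp |b| := by linarith [Real.add_one_le_exp |b|]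
  calc |b| * tiltWeight t x b ≤ Real.exp |b| * tiltWeight t x b :=
        mul_le_mul_of_nonneg_right hb (tiltWeight_pos t x b).le
    _ = Real.exp (|b| + (b * x - b ^ 2 * t / 2)) := by rw [tiltWeight, Real.exp_add]
    _ ≤ Real.exp ((|x| + 1) ^ 2 / (2 * t)) := by
        refine Real.exp_le_exp.2 ?_
        rw [le_div_iff₀ (by positivity)]
        have hbx : b * x ≤ |b| * |x| := by rw [← abs_mul]; exact le_abs_self _
        rw [← sq_abs b]
        nlinarith [sq_nonneg (|b| * t - (|x| + 1)), mul_le_mul_of_nonneg_left hbx ht.le]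

variable {ν : Measure ℝ} [IsFiniteMeasure ν]

lemma integrable_tiltWeight (ht : 0 < t) : Integrable (tiltWeight t x) ν :=
  .of_bound (continuous_tiltWeight t x).aestronglyMeasurable _ <| .of_forall fun b => by
    rw [Real.norm_of_nonneg (tiltWeight_pos t x b).le]; exact tiltWeight_le ht b

lemma integrable_mul_tiltWeight (ht : 0 < t) : Integrable (fun b => b * tiltWeight t x b) ν :=
  .of_bound (continuous_id.mul (continuous_tiltWeight t x)).aestronglyMeasurable _ <|
    .of_forall fun b => by
      rw [norm_mul, Real.norm_eq_abs, Real.norm_of_nonneg (tiltWeight_pos t x b).le]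
      exact abs_mul_tiltWeight_le ht b

lemma integrable_sub_mul_tiltWeight (ht : 0 < t) (r : ℝ) :
    Integrable (fun b => (b - r) * tiltWeight t x b) ν :=
  ((integrable_mul_tiltWeight ht).sub ((integrable_tiltWeight ht).const_mul r)).congr <|
    .of_forall fun b => by simp only [Pi.sub_apply]; ring

lemma integral_tiltWeight_pos [NeZero ν] (ht : 0 < t) : 0 < ∫ b, tiltWeight t x b ∂ν :=
  integral_exp_pos (integrable_tiltWeight ht)

end TiltWeight

section Concentration

variable {ν : Measure ℝ} [IsFiniteMeasure ν] {t x r η : ℝ}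

lemma tiltMean_univ_sub [NeZero ν] (ht : 0 < t) :
    tiltMean ν t x univ - r =
      (∫ b, (b - r) * tiltWeight t x b ∂ν) / ∫ b, tiltWeight t x b ∂ν := by
  have hZ := (integral_tiltWeight_pos (ν := ν) (x := x) ht).ne'
  simp_rw [sub_mul]
  rw [integral_sub (integrable_mul_tiltWeight ht) ((integrable_tiltWeight ht).const_mul r),
    integral_const_mul, tiltMean_univ]
  field_simp

lemma le_tiltMean_univ [NeZero ν] (ht : 0 < t) (hnull : ν (Iio r) = 0) :
    r ≤ tiltMean ν t x univ := by
  have hr : ∀ᵐ b ∂ν, r ≤ b := by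
    rw [ae_iff]; simp only [not_le]; exact hnull
  rw [← sub_nonneg, tiltMean_univ_sub ht]
  refine div_nonneg (integral_nonneg_of_ae ?_) (integral_tiltWeight_pos ht).le
  filter_upwards [hr] with b hb using mul_nonneg (sub_nonneg.2 hb) (tiltWeight_pos t x b).le

lemma sub_mul_tiltWeight_le (ht : 0 < t) (hη : 0 < η) (hx : x ≤ (r + η) * t) {a b : ℝ}
    (ha : a ∈ Ico r (r + η)) (hb : r + 4 * η ≤ b) :
    (b - r) * tiltWeight t x b ≤ 2 / (t * η) * tiltWeight t x a := by
  obtain ⟨har, haη⟩ := ha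
  -- from `a` to `b` the weight drops at least by the factor `exp (-t η (b - r) / 2)`
  have hgap : t * η * (b - r) / 2 ≤ (a * x - a ^ 2 * t / 2) - (b * x - b ^ 2 * t / 2) := by
    nlinarith [mul_nonneg (by linarith : (0:ℝ) ≤ b - a) (by linarith : 0 ≤ (r + η) * t - x),
      mul_nonneg ht.le (mul_nonneg (by linarith : (0:ℝ) ≤ r + η - a)
        (by linarith : (0:ℝ) ≤ (b + a) / 2 - r - η)),
      mul_nonneg ht.le (mul_nonneg (by linarith : (0:ℝ) ≤ b - r - η) (by linarith : 0 ≤ a - r)),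
      mul_nonneg ht.le (mul_nonneg (by linarith : (0:ℝ) ≤ b - r) (by linarith : 0 ≤ b - r - 4 * η))]
  have hratio : t * η * (b - r) / 2 * tiltWeight t x b ≤ tiltWeight t x a := by
    calc t * η * (b - r) / 2 * tiltWeight t x b
        ≤ Real.exp ((a * x - a ^ 2 * t / 2) - (b * x - b ^ 2 * t / 2)) * tiltWeight t x b := by
          refine mul_le_mul_of_nonneg_right ?_ (tiltWeight_pos t x b).le
          linarith [Real.add_one_le_exp ((a * x - a ^ 2 * t / 2) - (b * x - b ^ 2 * t / 2))]
      _ = tiltWeight t x a := by rw [tiltWeight, ← Real.exp_add, sub_add_cancel, tiltWeight]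
  calc (b - r) * tiltWeight t x b = 2 / (t * η) * (t * η * (b - r) / 2 * tiltWeight t x b) := by
        field_simp
    _ ≤ 2 / (t * η) * tiltWeight t x a := by gcongr

lemma measureReal_Ico_mul_sub_mul_tiltWeight_le (ht : 0 < t) (hη : 0 < η)
    (hx : x ≤ (r + η) * t) {b : ℝ} (hb : r + 4 * η ≤ b) :
    ν.real (Ico r (r + η)) * ((b - r) * tiltWeight t x b) ≤
      2 / (t * η) * ∫ a, tiltWeight t x a ∂ν := by
  have hint := (integrable_tiltWeight (ν := ν) (x := x) ht).const_mul (2 / (t * η))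
  calc ν.real (Ico r (r + η)) * ((b - r) * tiltWeight t x b)
      = ∫ _ in Ico r (r + η), (b - r) * tiltWeight t x b ∂ν := by
        rw [setIntegral_const, smul_eq_mul]
    _ ≤ ∫ a in Ico r (r + η), 2 / (t * η) * tiltWeight t x a ∂ν :=
        setIntegral_mono_on (integrableOn_const (measure_ne_top _ _)) hint.integrableOn
          measurableSet_Ico fun a ha => sub_mul_tiltWeight_le ht hη hx ha hb
    _ ≤ ∫ a, 2 / (t * η) * tiltWeight t x a ∂ν :=
        setIntegral_le_integral hint (.of_forall fun a => by
          have := tiltWeight_pos t x a; positivity)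
    _ = 2 / (t * η) * ∫ a, tiltWeight t x a ∂ν := integral_const_mul _ _

lemma tiltMean_univ_le [NeZero ν] (ht : 0 < t) (hη : 0 < η) (hx : x ≤ (r + η) * t)
    (hpos : 0 < ν (Ico r (r + η))) :
    tiltMean ν t x univ ≤
      r + (4 * η + 2 * ν.real univ / (ν.real (Ico r (r + η)) * (t * η))) := by
  set c := ν.real (Ico r (r + η))
  set Z := ∫ b, tiltWeight t x b ∂ν
  have hc : 0 < c := ENNReal.toReal_pos hpos.ne' (measure_ne_top _ _)
  have hZ : 0 < Z := integral_tiltWeight_pos ht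
  have hpt : ∀ b,
      (b - r) * tiltWeight t x b ≤ 4 * η * tiltWeight t x b + 2 / (t * η) * Z / c := by
    intro b
    have hW := tiltWeight_pos t x b
    rcases le_or_gt b (r + 4 * η) with hb | hb
    · have : 0 ≤ 2 / (t * η) * Z / c := by positivity
      nlinarith
    · have := measureReal_Ico_mul_sub_mul_tiltWeight_le (ν := ν) ht hη hx hb.le
      have : (b - r) * tiltWeight t x b ≤ 2 / (t * η) * Z / c := by
        rw [le_div_iff₀ hc]; linarith
      nlinarith
  have hint : ∫ b, (b - r) * tiltWeight t x b ∂ν ≤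
      (4 * η + 2 * ν.real univ / (c * (t * η))) * Z := by
    refine (integral_mono (integrable_sub_mul_tiltWeight ht r)
      (((integrable_tiltWeight ht).const_mul _).add (integrable_const _)) hpt).trans_eq ?_
    simp only [Pi.add_apply]
    rw [integral_add ((integrable_tiltWeight ht).const_mul _) (integrable_const _),
      integral_const_mul, integral_const, smul_eq_mul]
    field_simp
    simp only [Z]
    ring
  rw [← sub_le_iff_le_add', tiltMean_univ_sub ht, div_le_iff₀ hZ]
  exact hint

theorem tendsto_tiltMean_univ_of_measure_Iio_eq_zero (hnull : ν (Iio r) = 0)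
    (hpos : ∀ η > 0, 0 < ν (Ico r (r + η))) {x : ℝ → ℝ}
    (hx : ∀ η > 0, ∀ᶠ t in atTop, x t ≤ (r + η) * t) :
    Tendsto (fun t => tiltMean ν t (x t) univ) atTop (𝓝 r) := by
  have : NeZero ν := ⟨fun h => by simpa [h] using hpos 1 one_pos⟩
  refine tendsto_order.2 ⟨fun a ha => ?_, fun a ha => ?_⟩
  · filter_upwards [eventually_gt_atTop 0] with t ht using ha.trans_le (le_tiltMean_univ ht hnull)
  · obtain ⟨η, hη, rfl⟩ : ∃ η > 0, a = r + 8 * η := ⟨(a - r) / 8, by linarith, by ring⟩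
    have hc : 0 < ν.real (Ico r (r + η)) :=
      ENNReal.toReal_pos (hpos η hη).ne' (measure_ne_top _ _)
    have hdecay : Tendsto (fun t => 2 * ν.real univ / (ν.real (Ico r (r + η)) * (t * η)))
        atTop (𝓝 0) :=
      tendsto_const_nhds.div_atTop ((tendsto_id.atTop_mul_const hη).const_mul_atTop hc)
    filter_upwards [hx η hη, eventually_gt_atTop 0,
      hdecay.eventually_lt_const (show (0:ℝ) < 4 * η by positivity)] with t hxt ht hsmall
    calc tiltMean ν t (x t) univ ≤ _ := tiltMean_univ_le ht hη hxt (hpos η hη)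
      _ < r + 8 * η := by linarith

lemma tiltMean_map_neg_univ (ν : Measure ℝ) (t x : ℝ) :
    tiltMean (ν.map Neg.neg) t (-x) univ = -tiltMean ν t x univ := by
  have hW : ∀ b, tiltWeight t (-x) (-b) = tiltWeight t x b := fun b => by
    simp only [tiltWeight]; ring_nf
  rw [tiltMean_univ, tiltMean_univ,
    integral_map (f := tiltWeight t (-x)) measurable_neg.aemeasurable
      (continuous_tiltWeight t _).aestronglyMeasurable,
    integral_map (f := fun b => b * tiltWeight t (-x) b) measurable_neg.aemeasurable
      (continuous_id.mul (continuous_tiltWeight t _)).aestronglyMeasurable]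
  simp only [hW, neg_mul, integral_neg, neg_div]

theorem tendsto_tiltMean_univ_of_measure_Ioi_eq_zero {l : ℝ} (hnull : ν (Ioi l) = 0)
    (hpos : ∀ η > 0, 0 < ν (Ioc (l - η) l)) {x : ℝ → ℝ}
    (hx : ∀ η > 0, ∀ᶠ t in atTop, (l - η) * t ≤ x t) :
    Tendsto (fun t => tiltMean ν t (x t) univ) atTop (𝓝 l) := by
  have hmap : ∀ s, MeasurableSet s → ν.map Neg.neg s = ν (-s) := fun s hs => by
    rw [Measure.map_apply measurable_neg hs, Set.neg_preimage]
  have := tendsto_tiltMean_univ_of_measure_Iio_eq_zero (ν := ν.map Neg.neg) (r := -l)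
    (x := fun t => -x t) (by rwa [hmap _ measurableSet_Iio, neg_Iio, neg_neg])
    (fun η hη => by
      rw [hmap _ measurableSet_Ico, neg_Ico, neg_neg, neg_add', neg_neg]; exact hpos η hη)
    (fun η hη => (hx η hη).mono fun t ht => by linarith)
  simpa only [tiltMean_map_neg_univ, neg_neg] using this.neg

end Concentration

section SupportEndpoints

open Measure

variable {ν : Measure ℝ}

lemma measure_Iio_sInf_support (h : BddBelow ν.support) : ν (Iio (sInf ν.support)) = 0 :=
  measure_mono_null (fun _ hb hbK => (csInf_le h hbK).not_gt hb) measure_compl_support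

lemma measure_Ioi_sSup_support (h : BddAbove ν.support) : ν (Ioi (sSup ν.support)) = 0 :=
  measure_mono_null (fun _ hb hbK => (le_csSup h hbK).not_gt hb) measure_compl_support

lemma measure_Ico_sInf_support_pos (hν : ν ≠ 0) (h : BddBelow ν.support) {η : ℝ} (hη : 0 < η) :
    0 < ν (Ico (sInf ν.support) (sInf ν.support + η)) := by
  set r := sInf ν.support
  have hr : r ∈ ν.support := isClosed_support.csInf_mem (nonempty_support hν) h
  calc 0 < ν (Ioo (r - η) (r + η)) :=
        (mem_support_iff_forall r).1 hr _ (Ioo_mem_nhds (by linarith) (by linarith))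
    _ ≤ ν (Iio r ∪ Ico r (r + η)) := measure_mono fun b hb => by
        rcases lt_or_ge b r with hbr | hbr
        exacts [Or.inl hbr, Or.inr ⟨hbr, hb.2⟩]
    _ ≤ ν (Iio r) + ν (Ico r (r + η)) := measure_union_le _ _
    _ = ν (Ico r (r + η)) := by rw [measure_Iio_sInf_support h, zero_add]

lemma measure_Ioc_sSup_support_pos (hν : ν ≠ 0) (h : BddAbove ν.support) {η : ℝ} (hη : 0 < η) :
    0 < ν (Ioc (sSup ν.support - η) (sSup ν.support)) := by
  set l := sSup ν.support
  have hl : l ∈ ν.support := isClosed_support.csSup_mem (nonempty_support hν) h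
  calc 0 < ν (Ioo (l - η) (l + η)) :=
        (mem_support_iff_forall l).1 hl _ (Ioo_mem_nhds (by linarith) (by linarith))
    _ ≤ ν (Ioi l ∪ Ioc (l - η) l) := measure_mono fun b hb => by
        rcases lt_or_ge l b with hbl | hbl
        exacts [Or.inl hbl, Or.inr ⟨hb.1, hbl⟩]
    _ ≤ ν (Ioi l) + ν (Ioc (l - η) l) := measure_union_le _ _
    _ = ν (Ioc (l - η) l) := by rw [measure_Ioi_sSup_support h, zero_add]

/- A point of the support charging no interval `(s - ε, s]` is isolated from the left in the
support: there are countably many such points, and each of them is null. -/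
lemma ae_measure_Ioc_pos (ν : Measure ℝ) : ∀ᵐ s ∂ν, ∀ ε > 0, 0 < ν (Ioc (s - ε) s) := by
  set N := {s | ¬ ∀ ε > 0, 0 < ν (Ioc (s - ε) s)}
  have hN : ∀ s ∈ N, ∃ ε > 0, ν (Ioc (s - ε) s) = 0 := fun s hs => by
    simpa only [N, mem_ofPred_eq, not_forall, not_lt, nonpos_iff_eq_zero, exists_prop] using hs
  have hiso : N ∩ ν.support ⊆ {s ∈ ν.support | 𝓝[ν.support ∩ Iio s] s = ⊥} := by
    rintro s ⟨hsN, hsK⟩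
    obtain ⟨ε, hε, hnull⟩ := hN s hsN
    have hgap := subset_compl_support_of_isOpen isOpen_Ioo
      (measure_mono_null Ioo_subset_Ioc_self hnull)
    exact ⟨hsK, empty_mem_iff_bot.1 (mem_nhdsWithin.2 ⟨Ioi (s - ε), isOpen_Ioi,
      sub_lt_self s hε, fun y ⟨hy, hyK, hys⟩ => hgap ⟨hy, hys⟩ hyK⟩)⟩
  have hcount : (N ∩ ν.support).Countable := countable_setOfPred_isolated_left_within.mono hiso
  have hpts : ν (N ∩ ν.support) = 0 := by
    rw [← biUnion_of_singleton (N ∩ ν.support), measure_biUnion_null_iff hcount]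
    intro s hs
    obtain ⟨ε, hε, hnull⟩ := hN s hs.1
    exact measure_mono_null
      (show {s} ⊆ Ioc (s - ε) s from singleton_subset_iff.2 ⟨sub_lt_self s hε, le_rfl⟩) hnull
  refine ae_iff.2 (measure_mono_null (fun s hs => ?_)
    (measure_union_null hpts measure_compl_support))
  by_cases hsK : s ∈ ν.support
  exacts [Or.inl ⟨hs, hsK⟩, Or.inr hsK]

end SupportEndpoints

section Endpoints

open Measure

lemma support_restrict_Ici_subset (μ : Measure ℝ) (a : ℝ) : (μ.restrict (Ici a)).support ⊆ Ici a :=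
  fun _ hb => by simpa only [closure_Ici] using (support_restrict_subset hb).1

lemma support_restrict_Iio_subset (μ : Measure ℝ) (a : ℝ) : (μ.restrict (Iio a)).support ⊆ Iic a :=
  fun _ hb => by simpa only [closure_Iio] using (support_restrict_subset hb).1

variable {μ : Measure ℝ}

lemma rEnd_eq_sInf_support (hμ : μ (Ici 0) ≠ 0) :
    rEnd μ = sInf (μ.restrict (Ici 0)).support := by
  have hν : μ.restrict (Ici 0) ≠ 0 := by rwa [Ne, restrict_eq_zero]
  have hK := support_restrict_Ici_subset μ 0
  have hbdd : BddBelow (μ.restrict (Ici 0)).support := ⟨0, hK⟩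
  set r := sInf (μ.restrict (Ici 0)).support
  refine IsLeast.csInf_eq ⟨⟨hK (isClosed_support.csInf_mem (nonempty_support hν) hbdd),
    fun η hη => (measure_Ico_sInf_support_pos hν hbdd hη).trans_le (restrict_apply_le _ _)⟩, ?_⟩
  rintro s ⟨hs0, hs⟩
  by_contra! hsr
  have hnull : μ (Iio r ∩ Ici 0) = 0 := by
    rw [← Measure.restrict_apply measurableSet_Iio]; exact measure_Iio_sInf_support hbdd
  have := hs (r - s) (sub_pos.2 hsr)
  rw [add_sub_cancel] at this
  exact this.ne' (measure_mono_null
    (show Ico s r ⊆ Iio r ∩ Ici 0 from fun b hb => ⟨hb.2, hs0.trans hb.1⟩) hnull)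

lemma lEnd_eq_sSup_support (hμ : μ (Iio 0) ≠ 0) :
    lEnd μ = sSup (μ.restrict (Iio 0)).support := by
  have hν : μ.restrict (Iio 0) ≠ 0 := by rwa [Ne, restrict_eq_zero]
  have hK := support_restrict_Iio_subset μ 0
  have hbdd : BddAbove (μ.restrict (Iio 0)).support := ⟨0, hK⟩
  set l := sSup (μ.restrict (Iio 0)).support
  have hnull : μ (Ioi l ∩ Iio 0) = 0 := by
    rw [← Measure.restrict_apply measurableSet_Ioi]; exact measure_Ioi_sSup_support hbdd
  have hexists : ∀ b < l, ∃ s, s < 0 ∧ (∀ ε > (0:ℝ), 0 < μ (Ioc (s - ε) s)) ∧ b < s := by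
    intro b hb
    have hpos := measure_Ioc_sSup_support_pos hν hbdd (sub_pos.2 hb)
    rw [sub_sub_cancel, Measure.restrict_apply measurableSet_Ioc] at hpos
    obtain ⟨s, hs, hsupp⟩ := exists_mem_of_measure_ne_zero_of_ae
      (hpos.trans_le (measure_mono fun y hy => ⟨hy.1.1, hy.2⟩) : 0 < μ (Ioo b 0)).ne'
      (ae_restrict_of_ae (ae_measure_Ioc_pos μ))
    exact ⟨s, hs.2, hsupp, hs.1⟩
  have hub : l ∈ upperBounds {s : ℝ | s < 0 ∧ ∀ ε > (0:ℝ), 0 < μ (Ioc (s - ε) s)} := by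
    rintro s ⟨hs0, hs⟩
    by_contra! hls
    have := hs (s - l) (sub_pos.2 hls)
    rw [sub_sub_cancel] at this
    exact this.ne' (measure_mono_null
      (show Ioc l s ⊆ Ioi l ∩ Iio 0 from fun y hy => ⟨hy.1, hy.2.trans_lt hs0⟩) hnull)
  obtain ⟨s, hs0, hs, -⟩ := hexists (l - 1) (by linarith)
  exact IsLUB.csSup_eq ⟨hub, fun b hb => not_lt.1 fun hbl =>
    let ⟨s, hs0, hs, hbs⟩ := hexists b hbl; (hb ⟨hs0, hs⟩).not_gt hbs⟩ ⟨s, hs0, hs⟩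

lemma rEnd_spec (hμ : μ (Ici 0) ≠ 0) :
    0 ≤ rEnd μ ∧ μ.restrict (Ici 0) (Iio (rEnd μ)) = 0 ∧
      ∀ η > 0, 0 < μ.restrict (Ici 0) (Ico (rEnd μ) (rEnd μ + η)) := by
  have hν : μ.restrict (Ici 0) ≠ 0 := by rwa [Ne, restrict_eq_zero]
  have hK := support_restrict_Ici_subset μ 0
  have hbdd : BddBelow (μ.restrict (Ici 0)).support := ⟨0, hK⟩
  rw [rEnd_eq_sInf_support hμ]
  exact ⟨hK (isClosed_support.csInf_mem (nonempty_support hν) hbdd),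
    measure_Iio_sInf_support hbdd, fun η hη => measure_Ico_sInf_support_pos hν hbdd hη⟩

lemma lEnd_spec (hμ : μ (Iio 0) ≠ 0) :
    lEnd μ ≤ 0 ∧ μ.restrict (Iio 0) (Ioi (lEnd μ)) = 0 ∧
      ∀ η > 0, 0 < μ.restrict (Iio 0) (Ioc (lEnd μ - η) (lEnd μ)) := by
  have hν : μ.restrict (Iio 0) ≠ 0 := by rwa [Ne, restrict_eq_zero]
  have hK := support_restrict_Iio_subset μ 0
  have hbdd : BddAbove (μ.restrict (Iio 0)).support := ⟨0, hK⟩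
  rw [lEnd_eq_sSup_support hμ]
  exact ⟨hK (isClosed_support.csSup_mem (nonempty_support hν) hbdd),
    measure_Ioi_sSup_support hbdd, fun η hη => measure_Ioc_sSup_support_pos hν hbdd hη⟩

end Endpoints

section LevelCurve

variable {μ : Measure ℝ} [IsFiniteMeasure μ] {p : ℝ} {x : ℝ → ℝ}

lemma norm_exp_mul_le_one {s b : ℝ} (hs : 0 ≤ s) (hb : b < 0) : ‖Real.exp (s * b)‖ ≤ 1 := by
  rw [Real.norm_of_nonneg (Real.exp_pos _).le, Real.exp_le_one_iff]
  exact mul_nonpos_of_nonneg_of_nonpos hs hb.le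

lemma integrableOn_exp_mul_Iio {s : ℝ} (hs : 0 ≤ s) :
    IntegrableOn (fun b => Real.exp (s * b)) (Iio 0) μ :=
  Integrable.of_bound (by fun_prop : Continuous fun b => Real.exp (s * b)).aestronglyMeasurable 1 <|
    (ae_restrict_mem measurableSet_Iio).mono fun _ hb => norm_exp_mul_le_one hs hb

lemma tendsto_setIntegral_exp_mul_Iio (μ : Measure ℝ) [IsFiniteMeasure μ] :
    Tendsto (fun s => ∫ b in Iio 0, Real.exp (s * b) ∂μ) atTop (𝓝 0) := by
  have := tendsto_integral_filter_of_dominated_convergence (μ := μ.restrict (Iio 0))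
    (F := fun s b => Real.exp (s * b)) (f := fun _ => 0) (fun _ => 1)
    (.of_forall fun _ => (by fun_prop : Continuous _).aestronglyMeasurable)
    ((eventually_ge_atTop 0).mono fun _ hs =>
      (ae_restrict_mem measurableSet_Iio).mono fun _ hb => norm_exp_mul_le_one hs hb)
    (integrable_const 1)
    ((ae_restrict_mem measurableSet_Iio).mono fun b hb =>
      Real.tendsto_exp_atBot.comp (tendsto_id.atTop_mul_const_of_neg hb))
  simpa using this

lemma eventually_le_mul_of_odds {r η : ℝ} (hp₀ : 0 ≤ p) (hp₁ : p < 1) (hr : 0 ≤ r) (hη : 0 < η)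
    (hpos : 0 < μ.restrict (Ici 0) (Ico r (r + η)))
    (hodds : ∀ᶠ t in atTop, p * ∫ b in Iio 0, tiltWeight t (x t) b ∂μ =
      (1 - p) * ∫ b in Ici 0, tiltWeight t (x t) b ∂μ) :
    ∀ᶠ t in atTop, x t ≤ (r + η) * t := by
  set c := (μ.restrict (Ici 0)).real (Ico r (r + η))
  have hc : 0 < c := ENNReal.toReal_pos hpos.ne' (measure_ne_top _ _)
  have hH : Tendsto (fun t => p * ∫ b in Iio 0, Real.exp (η * t * b) ∂μ) atTop (𝓝 0) := by
    simpa using ((tendsto_setIntegral_exp_mul_Iio μ).comp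
      (tendsto_id.const_mul_atTop hη)).const_mul p
  filter_upwards [hodds, eventually_gt_atTop 0,
    hH.eventually_lt_const (mul_pos (sub_pos.2 hp₁) hc)] with t hodds_t ht hsmall
  by_contra! hxt
  -- then `(-∞, 0)` carries at most `∫ exp (η t b)`, negligible against the weight `≥ 1`
  -- on `[r, r + η)`
  have hIio_le : ∫ b in Iio 0, tiltWeight t (x t) b ∂μ ≤ ∫ b in Iio 0, Real.exp (η * t * b) ∂μ :=
    setIntegral_mono_on (integrable_tiltWeight ht).integrableOn
      (integrableOn_exp_mul_Iio (by positivity)) measurableSet_Iio fun b hb => by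
        have hb : b < 0 := hb
        refine Real.exp_le_exp.2 ?_
        nlinarith [mul_le_mul_of_nonpos_left hxt.le hb.le, mul_nonneg (neg_nonneg.2 hb.le) hr,
          mul_nonneg (sq_nonneg b) ht.le]
  have hle_Ici : c ≤ ∫ b in Ici 0, tiltWeight t (x t) b ∂μ := by
    calc c = ∫ _ in Ico r (r + η), (1:ℝ) ∂μ.restrict (Ici 0) := by
          rw [setIntegral_const, smul_eq_mul, mul_one]
      _ ≤ ∫ b in Ico r (r + η), tiltWeight t (x t) b ∂μ.restrict (Ici 0) :=
          setIntegral_mono_on (integrableOn_const (measure_ne_top _ _))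
            (integrable_tiltWeight ht).integrableOn measurableSet_Ico fun b hb => by
              refine Real.one_le_exp ?_
              nlinarith [mul_le_mul_of_nonneg_left hxt.le (hr.trans hb.1),
                mul_nonneg (mul_nonneg (hr.trans hb.1) ht.le)
                  (by linarith [hb.2] : 0 ≤ r + η - b / 2)]
      _ ≤ ∫ b, tiltWeight t (x t) b ∂μ.restrict (Ici 0) :=
          setIntegral_le_integral (integrable_tiltWeight ht)
            (.of_forall fun b => (tiltWeight_pos _ _ b).le)
  nlinarith [mul_le_mul_of_nonneg_left hIio_le hp₀,
    mul_le_mul_of_nonneg_left hle_Ici (sub_nonneg.2 hp₁.le)]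

lemma eventually_mul_le_of_odds {l η : ℝ} (hp₀ : 0 < p) (hp₁ : p ≤ 1) (hl : l ≤ 0) (hη : 0 < η)
    (hpos : 0 < μ.restrict (Iio 0) (Ioc (l - η) l))
    (hodds : ∀ᶠ t in atTop, p * ∫ b in Iio 0, tiltWeight t (x t) b ∂μ =
      (1 - p) * ∫ b in Ici 0, tiltWeight t (x t) b ∂μ) :
    ∀ᶠ t in atTop, (l - η) * t ≤ x t := by
  set S := Ioc (l - η) l ∩ Iio 0
  have hS : MeasurableSet S := measurableSet_Ioc.inter measurableSet_Iio
  rw [Measure.restrict_apply measurableSet_Ioc] at hpos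
  have hSint : IntegrableOn (fun b : ℝ => -b) S μ :=
    continuous_neg.integrableOn_Icc.mono_set (inter_subset_left.trans Ioc_subset_Icc_self)
  have hK : 0 < ∫ b in S, -b ∂μ := by
    rw [setIntegral_pos_iff_support_of_nonneg_ae
      ((ae_restrict_mem hS).mono fun b hb => neg_nonneg.2 hb.2.le) hSint]
    rwa [inter_eq_right.2 (show S ⊆ Function.support fun b : ℝ => -b from
      fun b hb => neg_ne_zero.2 (ne_of_lt hb.2))]
  have hgrow : Tendsto (fun t => p * (η * t / 2 * ∫ b in S, -b ∂μ)) atTop atTop :=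
    (((tendsto_id.const_mul_atTop hη).atTop_div_const two_pos).atTop_mul_const hK).const_mul_atTop
      hp₀
  filter_upwards [hodds, eventually_gt_atTop 0,
    hgrow.eventually_gt_atTop ((1 - p) * μ.real univ)] with t hodds_t ht hbig
  by_contra! hxt
  -- then `[0, ∞)` carries weight at most `1`, while the weight on `(l - η, l] ∩ (-∞, 0)`
  -- grows linearly in `t`
  have hIci_le : ∫ b in Ici 0, tiltWeight t (x t) b ∂μ ≤ μ.real univ := by
    calc ∫ b in Ici 0, tiltWeight t (x t) b ∂μ ≤ ∫ _ in Ici 0, (1:ℝ) ∂μ :=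
          setIntegral_mono_on (integrable_tiltWeight ht).integrableOn
            (integrableOn_const (measure_ne_top _ _)) measurableSet_Ici fun b hb => by
              have hb : 0 ≤ b := hb
              refine Real.exp_le_one_iff.2 ?_
              nlinarith [mul_le_mul_of_nonneg_left hxt.le hb,
                mul_nonneg hb (mul_nonneg ht.le (by linarith : 0 ≤ η - l)), sq_nonneg b]
      _ = μ.real (Ici 0) := by rw [setIntegral_const, smul_eq_mul, mul_one]
      _ ≤ μ.real univ := measureReal_mono (subset_univ _)
  have hle_Iio : η * t / 2 * ∫ b in S, -b ∂μ ≤ ∫ b in Iio 0, tiltWeight t (x t) b ∂μ := by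
    calc η * t / 2 * ∫ b in S, -b ∂μ = ∫ b in S, η * t / 2 * -b ∂μ :=
          (integral_const_mul _ _).symm
      _ ≤ ∫ b in S, tiltWeight t (x t) b ∂μ :=
          setIntegral_mono_on (hSint.const_mul _) (integrable_tiltWeight ht).integrableOn hS
            fun b ⟨⟨hb₁, hb₂⟩, hb₀⟩ => by
              have hb₀ : b < 0 := hb₀
              have hexp := Real.add_one_le_exp (b * x t - b ^ 2 * t / 2)
              rw [tiltWeight]
              nlinarith [mul_le_mul_of_nonpos_left hxt.le hb₀.le,
                mul_nonneg (mul_nonneg (neg_nonneg.2 hb₀.le) ht.le)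
                  (by linarith : 0 ≤ b / 2 - l + η / 2)]
      _ ≤ ∫ b in Iio 0, tiltWeight t (x t) b ∂μ :=
          setIntegral_mono_set (integrable_tiltWeight ht).integrableOn
            (.of_forall fun b => (tiltWeight_pos _ _ b).le) (inter_subset_right.eventuallyLE)
  nlinarith [mul_le_mul_of_nonneg_left hle_Iio hp₀.le,
    mul_le_mul_of_nonneg_left hIci_le (sub_nonneg.2 hp₁)]

end LevelCurve

lemma tiltMean_eq_mul_tiltMean_restrict {μ : Measure ℝ} {t x q : ℝ} {S : Set ℝ}
    (h : ∫ b in S, tiltWeight t x b ∂μ = q * ∫ b, tiltWeight t x b ∂μ) (hq : q ≠ 0) :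
    tiltMean μ t x S = q * tiltMean (μ.restrict S) t x univ := by
  rw [tiltMean_eq, tiltMean_univ, h, ← mul_div_assoc, mul_div_mul_left _ _ hq]

lemma setIntegral_tiltWeight_Ici_Iio_of_tiltProb_eq {μ : Measure ℝ} [IsFiniteMeasure μ] [NeZero μ]
    {t x p : ℝ} (ht : 0 < t) (h : tiltProb μ t x (Ici 0) = p) :
    ∫ b in Ici 0, tiltWeight t x b ∂μ = p * ∫ b, tiltWeight t x b ∂μ ∧
      ∫ b in Iio 0, tiltWeight t x b ∂μ = (1 - p) * ∫ b, tiltWeight t x b ∂μ := by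
  have hsplit := integral_add_compl (measurableSet_Ici (a := (0:ℝ)))
    (integrable_tiltWeight (ν := μ) (x := x) ht)
  rw [compl_Ici] at hsplit
  rw [tiltProb_eq, div_eq_iff (integral_tiltWeight_pos ht).ne'] at h
  constructor <;> linarith

theorem stmt_12_general (μ : Measure ℝ) [IsProbabilityMeasure μ]
    (hμ0 : 0 < μ (Set.Ici (0:ℝ))) (hμ1 : μ (Set.Ici (0:ℝ)) < 1)
    (p : ℝ) (hp : p ∈ Set.Ioo (0:ℝ) 1)
    (x : ℝ → ℝ) (hx : ∀ t > (0:ℝ), tiltProb μ t (x t) (Set.Ici 0) = p) :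
    Tendsto (fun t => tiltMean μ t (x t) (Set.Ici 0)) atTop (nhds (p * rEnd μ)) ∧
    Tendsto (fun t => tiltMean μ t (x t) (Set.Iio 0)) atTop (nhds ((1 - p) * lEnd μ)) ∧
    Tendsto (fun t =>
        (1 - p) * tiltMean μ t (x t) (Set.Ici 0) - p * tiltMean μ t (x t) (Set.Iio 0))
      atTop (nhds ((rEnd μ - lEnd μ) * p * (1 - p))) := by
  obtain ⟨hp₀, hp₁⟩ := hp
  have hμneg : μ (Iio 0) ≠ 0 := by
    rw [← compl_Ici, prob_compl_eq_one_sub measurableSet_Ici]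
    exact (tsub_pos_of_lt hμ1).ne'
  obtain ⟨hr₀, hr_null, hr_pos⟩ := rEnd_spec hμ0.ne'
  obtain ⟨hl₀, hl_null, hl_pos⟩ := lEnd_spec hμneg
  have hsplit := fun t (ht : 0 < t) => setIntegral_tiltWeight_Ici_Iio_of_tiltProb_eq ht (hx t ht)
  have hodds : ∀ᶠ t in atTop, p * ∫ b in Iio 0, tiltWeight t (x t) b ∂μ =
      (1 - p) * ∫ b in Ici 0, tiltWeight t (x t) b ∂μ :=
    (eventually_gt_atTop 0).mono fun t ht => by rw [(hsplit t ht).1, (hsplit t ht).2]; ring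
  have hIci : Tendsto (fun t => tiltMean μ t (x t) (Ici 0)) atTop (𝓝 (p * rEnd μ)) :=
    ((tendsto_tiltMean_univ_of_measure_Iio_eq_zero hr_null hr_pos fun η hη =>
      eventually_le_mul_of_odds hp₀.le hp₁ hr₀ hη (hr_pos η hη) hodds).const_mul p).congr' <|
      (eventually_gt_atTop 0).mono fun t ht =>
        (tiltMean_eq_mul_tiltMean_restrict (hsplit t ht).1 hp₀.ne').symm
  have hIio : Tendsto (fun t => tiltMean μ t (x t) (Iio 0)) atTop (𝓝 ((1 - p) * lEnd μ)) :=
    ((tendsto_tiltMean_univ_of_measure_Ioi_eq_zero hl_null hl_pos fun η hη =>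
      eventually_mul_le_of_odds hp₀ hp₁.le hl₀ hη (hl_pos η hη) hodds).const_mul (1 - p)).congr' <|
      (eventually_gt_atTop 0).mono fun t ht =>
        (tiltMean_eq_mul_tiltMean_restrict (hsplit t ht).2 (sub_pos.2 hp₁).ne').symm
  refine ⟨hIci, hIio, ?_⟩
  convert (hIci.const_mul (1 - p)).sub (hIio.const_mul p) using 2
  ring

theorem stmt_12 (μ : Measure ℝ) [IsProbabilityMeasure μ]
    (hμ0 : 0 < μ (Set.Ici (0:ℝ))) (hμ1 : μ (Set.Ici (0:ℝ)) < 1)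
    (ε : ℝ) (hε : 0 < ε)
    (hexp : Integrable (fun b => Real.exp (ε * b ^ 2)) μ)
    (p : ℝ) (hp : p ∈ Set.Ioo (0:ℝ) 1)
    (x : ℝ → ℝ) (hx : ∀ t > (0:ℝ), tiltProb μ t (x t) (Set.Ici 0) = p) :
    Tendsto (fun t => tiltMean μ t (x t) (Set.Ici 0)) atTop (nhds (p * rEnd μ)) ∧
    Tendsto (fun t => tiltMean μ t (x t) (Set.Iio 0)) atTop (nhds ((1 - p) * lEnd μ)) ∧
    Tendsto (fun t =>
        (1 - p) * tiltMean μ t (x t) (Set.Ici 0) - p * tiltMean μ t (x t) (Set.Iio 0))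
      atTop (nhds ((rEnd μ - lEnd μ) * p * (1 - p))) :=
  stmt_12_general μ hμ0 hμ1 p hp x hx
end
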